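/- arXiv:math/0412284 — 2 statements merged into one kernel-verified Lean document; each statement's English description precedes it below -/
import Mathlib

section
/- Let k be a field of characteristic ≠ 2 and O = k[[T₁,T₂]] with maximal ideal m. Define P(X,Y,Z) = X² − Z·Y² over O. For every even integer i = 2k−2 with k ≥ 3, there exist (u,v,z) ∈ O³ with P(u,v,z) ∈ m^{k²−4}, such that for every exact solution (x̄,ȳ,z̄) ∈ O³ of P(x̄,ȳ,z̄) = 0, at least one of u−x̄, v−ȳ, z−z̄ does not lie in m^{i+1}. (Take u = u_{k−2,k}, v = T₁^{2k−3}, z = T₁² + T₂^{k−2}.) -/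
/-!
Approximate solution, `kk ≥ 4`: by Hensel's lemma `1 + t` has a square root in `k⟦t⟧`. Its
truncation `P` of degree `kk - 1`, homogenized and evaluated at `t = T₂ ^ (kk - 2)`, `1 = T₁ ^ 2`,
gives `u` with `u² - z v² = T₂ ^ (kk (kk - 2)) G`, where `G` is a form of degree `kk - 2` in
`T₂ ^ (kk - 2), T₁ ^ 2 ∈ m ^ 2`; hence `u² - z v² ∈ m ^ (kk ^ 2 - 4)`. For `kk = 3`, `u = T₁ ^ 4`
already works.

Distance from exact solutions: give `T₁, T₂` the weights `kk - 2, 2`. Every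
`w ≡ z mod m ^ (2 kk - 1)` has weighted initial form `z = T₁ ^ 2 + T₂ ^ (kk - 2)`, and `y ≡ v`
forces `y ≠ 0`. Taking initial forms in `x² = w y²` gives `A² = z B²` for polynomials `A`,
`B ≠ 0`. As `k[T₁, T₂]` is integrally closed, `z` would be a square, and so would its
dehomogenization `X² + 1`, which is squarefree since `2 ≠ 0`.
-/

theorem Finsupp.degree_le_weight {σ : Type*} {w : σ → ℕ} (hw : ∀ i, w i ≠ 0) (d : σ →₀ ℕ) :
    d.degree ≤ weight w d := by
  rw [weight_apply, Finsupp.sum, degree_apply]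
  exact Finset.sum_le_sum fun i _ => Nat.le_mul_of_pos_right _ (Nat.pos_of_ne_zero (hw i))

theorem isSquare_of_sq_eq_mul_sq {R : Type*} [CommRing R] [IsDomain R] [IsIntegrallyClosed R]
    {a b c : R} (hb : b ≠ 0) (h : a ^ 2 = c * b ^ 2) : IsSquare c := by
  obtain ⟨d, rfl⟩ := (IsIntegrallyClosed.pow_dvd_pow_iff two_ne_zero).1 (Dvd.intro_left c h.symm)
  exact ⟨d, mul_right_cancel₀ (pow_ne_zero 2 hb) (by linear_combination -h)⟩

namespace Polynomial

variable {k : Type*} [Field k]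

theorem not_isSquare_X_sq_add_one (h2 : (2 : k) ≠ 0) : ¬ IsSquare (X ^ 2 + 1 : k[X]) := by
  rintro ⟨c, hc⟩
  have hsf : Squarefree (X ^ 2 + 1 : k[X]) := by
    simpa using (separable_X_pow_sub_C (-1 : k) (by exact_mod_cast h2) (by simp)).squarefree
  have hc0 : c.natDegree = 0 := natDegree_eq_zero_of_isUnit (hsf c hc.symm.dvd)
  have hdeg : (X ^ 2 + 1 : k[X]).natDegree = 2 := by compute_degree!
  have := natDegree_mul_le (p := c) (q := c)
  rw [← hc, hdeg, hc0] at this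
  omega

theorem exists_sq_eq_one_add_X_add_X_pow_mul (h2 : (2 : k) ≠ 0) (n : ℕ) :
    ∃ P R : k[X], P.natDegree ≤ n ∧ R.natDegree ≤ n - 1 ∧
      P ^ 2 = 1 + X + X ^ (n + 1) * R := by
  have h2' : IsUnit (2 : PowerSeries k) :=
    PowerSeries.isUnit_iff_constantCoeff.2 (by rw [map_ofNat]; exact h2.isUnit)
  obtain ⟨s, hs, -⟩ := HenselianRing.is_henselian (I := Ideal.span {PowerSeries.X})
    (X ^ 2 - C (1 + PowerSeries.X : PowerSeries k)) (monic_X_pow_sub_C _ two_ne_zero) 1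
    (by simp) (by simpa [one_add_one_eq_two] using h2'.map (Ideal.Quotient.mk _))
  have hs : s ^ 2 = 1 + PowerSeries.X := by simpa [sub_eq_zero] using hs
  set P := PowerSeries.trunc (n + 1) s
  have hP : P.natDegree ≤ n := Nat.lt_succ_iff.mp (PowerSeries.natDegree_trunc_lt s n)
  obtain ⟨R, hR⟩ : X ^ (n + 1) ∣ P ^ 2 - (1 + X) := by
    have htrunc : PowerSeries.trunc (n + 1) ((P ^ 2 - (1 + X) : k[X]) : PowerSeries k) = 0 := by
      simp [PowerSeries.trunc_sub, P, hs]
    refine X_pow_dvd_iff.2 fun d hd => ?_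
    have := congrArg (coeff · d) htrunc
    rwa [PowerSeries.coeff_trunc, if_pos hd, coeff_coe] at this
  refine ⟨P, R, hP, ?_, by rw [← hR]; ring⟩
  rcases eq_or_ne R 0 with rfl | hR0
  · simp
  have hXR := natDegree_X_pow_mul (n + 1) hR0
  rw [← hR] at hXR
  have hdeg : (P ^ 2 - (1 + X)).natDegree ≤ max (2 * n) 1 :=
    (natDegree_sub_le _ _).trans (max_le_max (natDegree_pow_le.trans (by omega))
      ((natDegree_add_le _ _).trans (by simp)))
  omega

end Polynomial

namespace MvPolynomial

theorem IsHomogeneous.aeval_mem_pow {σ R A : Type*} [CommSemiring R] [CommRing A]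
    [Algebra R A] {φ : MvPolynomial σ R} {n : ℕ} (hφ : φ.IsHomogeneous n) {I : Ideal A}
    {g : σ → A} (hg : ∀ i, g i ∈ I) : MvPolynomial.aeval g φ ∈ I ^ n := by
  rw [φ.as_sum, map_sum]
  refine Ideal.sum_mem _ fun d hd => ?_
  rw [aeval_monomial, Finsupp.prod, ← hφ (mem_support_iff.1 hd), Finsupp.weight_apply,
    Finsupp.sum, ← Finset.prod_pow_eq_pow_sum]
  exact Ideal.mul_mem_left _ _
    (Ideal.prod_mem_prod fun i _ => by simpa using Ideal.pow_mem_pow (hg i) _)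

theorem exists_sq_eq_add_X_pow_mul {k : Type*} [Field k] (h2 : (2 : k) ≠ 0) {n : ℕ}
    (hn : n ≠ 0) : ∃ H G : MvPolynomial (Fin 2) k, G.IsHomogeneous (n - 1) ∧
      H ^ 2 = (X 0 + X 1) * X 1 ^ (2 * n - 1) + X 0 ^ (n + 1) * G := by
  obtain ⟨P, R, hP, hR, hPR⟩ := Polynomial.exists_sq_eq_one_add_X_add_X_pow_mul h2 n
  refine ⟨P.homogenize n, R.homogenize (n - 1), Polynomial.isHomogeneous_homogenize R, ?_⟩
  have hXR := Polynomial.homogenize_mul (Polynomial.X ^ (n + 1)) R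
    (Polynomial.natDegree_X_pow_le (n + 1)) hR
  rw [show n + 1 + (n - 1) = n + n by omega, Polynomial.homogenize_X_pow le_rfl, Nat.sub_self,
    pow_zero, mul_one] at hXR
  rw [sq, ← Polynomial.homogenize_mul P P hP hP, ← sq, hPR, Polynomial.homogenize_add,
    Polynomial.homogenize_add, hXR, Polynomial.homogenize_one, Polynomial.homogenize_X (by omega),
    show n + n - 1 = 2 * n - 1 by omega, show n + n = 2 * n - 1 + 1 by omega, pow_succ]
  ring

end MvPolynomial

namespace MvPowerSeries

open IsLocalRing

variable {σ : Type*}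

section Field

variable {K : Type*} [Field K]

theorem mem_maximalIdeal_iff {f : MvPowerSeries σ K} :
    f ∈ maximalIdeal (MvPowerSeries σ K) ↔ constantCoeff f = 0 := by
  rw [mem_maximalIdeal, mem_nonunits_iff, isUnit_iff_constantCoeff, isUnit_iff_ne_zero, not_not]

theorem X_mem_maximalIdeal (i : σ) : (X i : MvPowerSeries σ K) ∈ maximalIdeal _ :=
  mem_maximalIdeal_iff.2 (constantCoeff_X i)

theorem le_order_of_mem_maximalIdeal_pow {N : ℕ} {f : MvPowerSeries σ K}
    (hf : f ∈ maximalIdeal (MvPowerSeries σ K) ^ N) : (N : ℕ∞) ≤ f.order := by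
  induction N generalizing f with
  | zero => simp
  | succ N ih =>
    rw [pow_succ] at hf
    refine Submodule.mul_induction_on hf (fun a ha b hb => ?_) (fun a b ha hb => ?_)
    · have hb : 1 ≤ b.order :=
        one_le_order_iff_constCoeff_eq_zero.2 (mem_maximalIdeal_iff.1 hb)
      push_cast
      exact (add_le_add (ih ha) hb).trans le_order_mul
    · exact (le_min ha hb).trans min_order_le_add

theorem X_pow_notMem_maximalIdeal_pow {n N : ℕ} (h : n < N) (i : σ) :
    (X i ^ n : MvPowerSeries σ K) ∉ maximalIdeal _ ^ N := fun hmem => by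
  have := le_order_of_mem_maximalIdeal_pow hmem
  rw [X_pow_eq, order_monomial_of_ne_zero one_ne_zero, Finsupp.degree_single] at this
  exact absurd (Nat.cast_le.1 this) (not_le.2 h)

end Field

section WeightedOrder

variable {R : Type*} [Semiring R] {w : σ → ℕ} {f g : MvPowerSeries σ R} {p : ℕ}

theorem order_le_weightedOrder (hw : ∀ i, w i ≠ 0) (f : MvPowerSeries σ R) :
    f.order ≤ f.weightedOrder w :=
  le_weightedOrder w fun d hd =>
    coeff_of_lt_order (lt_of_le_of_lt (Nat.cast_le.2 (d.degree_le_weight hw)) hd)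

theorem isWeightedHomogeneous_X_pow (w : σ → ℕ) (i : σ) (n : ℕ) :
    IsWeightedHomogeneous w (X i ^ n : MvPowerSeries σ R) (n * w i) := fun {d} hd => by
  classical
  rw [X_pow_eq, coeff_monomial] at hd
  rw [(ite_ne_right_iff.1 hd).1, Finsupp.weight_single, smul_eq_mul]

theorem IsWeightedHomogeneous.weightedOrder_eq (hf : IsWeightedHomogeneous w f p) (hf0 : f ≠ 0) :
    f.weightedOrder w = p := by
  obtain ⟨d, hd⟩ := ne_zero_iff_exists_coeff_ne_zero f |>.1 hf0
  exact (weightedOrder_eq_nat w).2 ⟨⟨d, hd, hf hd⟩, fun d hd => hf.coeff_eq_zero hd.ne⟩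

noncomputable def weightedInitialForm (w : σ → ℕ) (f : MvPowerSeries σ R) : MvPowerSeries σ R :=
  weightedHomogeneousComponent w (f.weightedOrder w).toNat f

theorem isWeightedHomogeneous_weightedInitialForm (w : σ → ℕ) (f : MvPowerSeries σ R) :
    IsWeightedHomogeneous w (weightedInitialForm w f) (f.weightedOrder w).toNat :=
  isWeightedHomogeneous_weightedHomogeneousComponent w f _

theorem weightedInitialForm_ne_zero (hf : f ≠ 0) : weightedInitialForm w f ≠ 0 :=
  weightedHomogeneousComponent_of_weightedOrder ((ne_zero_iff_weightedOrder_finite w).1 hf)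

theorem weightedInitialForm_add_of_lt (hf : IsWeightedHomogeneous w f p) (hf0 : f ≠ 0)
    (hg : p < g.weightedOrder w) : weightedInitialForm w (f + g) = f := by
  have hfp := hf.weightedOrder_eq hf0
  have hord : (f + g).weightedOrder w = p := by
    rw [weightedOrder_add_of_weightedOrder_ne w (hfp ▸ hg.ne), hfp, min_eq_left hg.le]
  rw [weightedInitialForm, hord, ENat.toNat_natCast, map_add,
    weightedHomogeneousComponent_of_lt_weightedOrder_eq_zero hg, add_zero,
    ← isWeightedHomogeneous_iff_eq_weightedHomogeneousComponent.1 hf]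

theorem weightedInitialForm_mul [NoZeroDivisors R] (w : σ → ℕ) (f g : MvPowerSeries σ R) :
    weightedInitialForm w (f * g) = weightedInitialForm w f * weightedInitialForm w g := by
  rcases eq_or_ne f 0 with rfl | hf
  · simp [weightedInitialForm]
  rcases eq_or_ne g 0 with rfl | hg
  · simp [weightedInitialForm]
  have hf' := (ne_zero_iff_weightedOrder_finite w).1 hf
  have hg' := (ne_zero_iff_weightedOrder_finite w).1 hg
  rw [weightedInitialForm, weightedOrder_mul, ← hf', ← hg', ← Nat.cast_add, ENat.toNat_natCast,
    weightedHomogeneousComponent_mul_of_le_weightedOrder hf'.le hg'.le]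
  rfl

end WeightedOrder

theorem IsWeightedHomogeneous.exists_coe_eq {R : Type*} [CommSemiring R] [Finite σ]
    {w : σ → ℕ} {p : ℕ} {f : MvPowerSeries σ R} (hw : ∀ i, w i ≠ 0)
    (hf : IsWeightedHomogeneous w f p) :
    ∃ P : MvPolynomial σ R, (P : MvPowerSeries σ R) = f := by
  classical
  refine ⟨trunc' R (Finsupp.equivFunOnFinite.symm fun _ => p) f, ?_⟩
  ext d
  rw [MvPolynomial.coeff_coe, coeff_trunc']
  split_ifs with hd
  · rfl
  · refine (hf.coeff_eq_zero fun hdp => hd fun i => ?_).symm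
    simpa [← hdp] using Finsupp.le_weight w (hw i) d

section

variable {k : Type*} [Field k]

local notation "𝔪" => maximalIdeal (MvPowerSeries (Fin 2) k)

theorem exists_sq_sub_mul_sq_mem (h2 : (2 : k) ≠ 0) {kk : ℕ} (hkk : 3 ≤ kk) :
    ∃ u : MvPowerSeries (Fin 2) k,
      u ^ 2 - (X 0 ^ 2 + X 1 ^ (kk - 2)) * (X 0 ^ (2 * kk - 3)) ^ 2 ∈ 𝔪 ^ (kk ^ 2 - 4) := by
  obtain rfl | hkk := hkk.eq_or_lt
  · refine ⟨X 0 ^ 4, ?_⟩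
    have hsq : (X 0 ^ 4 : MvPowerSeries (Fin 2) k) ^ 2 -
        (X 0 ^ 2 + X 1 ^ (3 - 2)) * (X 0 ^ (2 * 3 - 3)) ^ 2 = -(X 1 * X 0 ^ 6) := by ring
    rw [hsq, Ideal.neg_mem_iff]
    refine Ideal.pow_le_pow_right (show 3 ^ 2 - 4 ≤ 1 + 6 by norm_num) ?_
    rw [pow_add, pow_one]
    exact Ideal.mul_mem_mul (X_mem_maximalIdeal 1) (Ideal.pow_mem_pow (X_mem_maximalIdeal 0) 6)
  obtain ⟨H, G, hG, hHG⟩ := MvPolynomial.exists_sq_eq_add_X_pow_mul h2 (n := kk - 1) (by omega)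
  set g : Fin 2 → MvPowerSeries (Fin 2) k := ![X 1 ^ (kk - 2), X 0 ^ 2]
  refine ⟨MvPolynomial.aeval g H, ?_⟩
  have hsq : MvPolynomial.aeval g H ^ 2 - (X 0 ^ 2 + X 1 ^ (kk - 2)) * (X 0 ^ (2 * kk - 3)) ^ 2 =
      (X 1 ^ (kk - 2)) ^ kk * MvPolynomial.aeval g G := by
    rw [← map_pow, hHG, show 2 * (kk - 1) - 1 = 2 * kk - 3 by omega,
      show kk - 1 + 1 = kk by omega]
    simp only [map_add, map_mul, map_pow, MvPolynomial.aeval_X, g, Matrix.cons_val_zero,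
      Matrix.cons_val_one, Matrix.cons_val_fin_one]
    ring
  have hg : ∀ i, g i ∈ 𝔪 ^ 2 := by
    intro i
    fin_cases i
    · exact Ideal.pow_le_pow_right (by omega) (Ideal.pow_mem_pow (X_mem_maximalIdeal 1) _)
    · exact Ideal.pow_mem_pow (X_mem_maximalIdeal 0) 2
  have hexp : kk ^ 2 - 4 = (kk - 2) * kk + 2 * (kk - 2) := by
    have : 4 ≤ kk ^ 2 := by nlinarith
    zify [this, (by omega : 2 ≤ kk)]
    ring
  rw [hsq, hexp, pow_add, pow_mul, pow_mul]
  exact Ideal.mul_mem_mul (Ideal.pow_mem_pow (Ideal.pow_mem_pow (X_mem_maximalIdeal 1) _) _)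
    (hG.aeval_mem_pow hg)

theorem weightedInitialForm_eq_of_sub_mem {kk : ℕ} (hkk : 3 ≤ kk) {g : MvPowerSeries (Fin 2) k}
    (hg : X 0 ^ 2 + X 1 ^ (kk - 2) - g ∈ 𝔪 ^ (2 * kk - 2 + 1)) :
    weightedInitialForm ![kk - 2, 2] g = X 0 ^ 2 + X 1 ^ (kk - 2) := by
  set w : Fin 2 → ℕ := ![kk - 2, 2]
  have hw : ∀ i, w i ≠ 0 := Fin.forall_fin_two.2 ⟨show kk - 2 ≠ 0 by omega, two_ne_zero⟩
  have h0 : IsWeightedHomogeneous w (X 0 ^ 2 : MvPowerSeries (Fin 2) k) ((kk - 2) * 2) := by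
    rw [mul_comm]
    exact isWeightedHomogeneous_X_pow w 0 2
  have h1 : IsWeightedHomogeneous w (X 1 ^ (kk - 2) : MvPowerSeries (Fin 2) k) ((kk - 2) * 2) :=
    isWeightedHomogeneous_X_pow w 1 (kk - 2)
  have hz0 : (X 0 ^ 2 + X 1 ^ (kk - 2) : MvPowerSeries (Fin 2) k) ≠ 0 := fun h => by
    have hne : (Finsupp.single 0 2 : Fin 2 →₀ ℕ) ≠ Finsupp.single 1 (kk - 2) := fun h' => by
      simpa using DFunLike.congr_fun h' 0
    have := congrArg (coeff (Finsupp.single 0 2)) h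
    rw [map_add, coeff_X_pow, coeff_X_pow, if_pos rfl, if_neg hne, map_zero] at this
    simp at this
  rw [show g = X 0 ^ 2 + X 1 ^ (kk - 2) + -(X 0 ^ 2 + X 1 ^ (kk - 2) - g) by ring]
  refine weightedInitialForm_add_of_lt (h0.add h1) hz0 ?_
  calc (((kk - 2) * 2 : ℕ) : ℕ∞) < (2 * kk - 2 + 1 : ℕ) := by norm_cast; omega
    _ ≤ (X 0 ^ 2 + X 1 ^ (kk - 2) - g).order := le_order_of_mem_maximalIdeal_pow hg
    _ ≤ _ := (order_le_weightedOrder hw _).trans (weightedOrder_neg w _).ge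

theorem sq_ne_mul_sq_of_sub_mem (h2 : (2 : k) ≠ 0) {kk : ℕ} (hkk : 3 ≤ kk)
    {x y g : MvPowerSeries (Fin 2) k} (hy : y ≠ 0)
    (hg : X 0 ^ 2 + X 1 ^ (kk - 2) - g ∈ 𝔪 ^ (2 * kk - 2 + 1)) : x ^ 2 ≠ g * y ^ 2 := by
  intro hxy
  set w : Fin 2 → ℕ := ![kk - 2, 2]
  have hw : ∀ i, w i ≠ 0 := Fin.forall_fin_two.2 ⟨show kk - 2 ≠ 0 by omega, two_ne_zero⟩
  set Z : MvPolynomial (Fin 2) k := .X 0 ^ 2 + .X 1 ^ (kk - 2)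
  have key : weightedInitialForm w x ^ 2 = Z * weightedInitialForm w y ^ 2 := by
    rw [sq, sq, ← weightedInitialForm_mul, ← weightedInitialForm_mul, ← sq, ← sq, hxy,
      weightedInitialForm_mul, weightedInitialForm_eq_of_sub_mem hkk hg]
    simp [Z]
  obtain ⟨A, hA⟩ := IsWeightedHomogeneous.exists_coe_eq hw
    (isWeightedHomogeneous_weightedInitialForm w x)
  obtain ⟨B, hB⟩ := IsWeightedHomogeneous.exists_coe_eq hw
    (isWeightedHomogeneous_weightedInitialForm w y)
  have hB0 : B ≠ 0 := by
    rintro rfl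
    exact weightedInitialForm_ne_zero hy (by rw [← hB, MvPolynomial.coe_zero])
  have hAB : A ^ 2 = Z * B ^ 2 :=
    MvPolynomial.coe_injective _ _ (by push_cast [hA, hB]; exact key)
  have hZ : MvPolynomial.aeval ![(Polynomial.X : Polynomial k), 1] Z = Polynomial.X ^ 2 + 1 := by
    simp [Z]
  exact Polynomial.not_isSquare_X_sq_add_one h2 (hZ ▸ (isSquare_of_sq_eq_mul_sq hB0 hAB).map _)

end

end MvPowerSeries

/-- For every even `i = 2k−2` (`k ≥ 3`) there is an approximate solution `(u,v,z)` of
`P = X² − ZY²` to order `k²−4` which is not congruent mod `m^{i+1}` to any exact solution. -/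
theorem approx_solution_far_from_exact
    {k : Type*} [Field k] (hk : ringChar k ≠ 2) (kk : ℕ) (hkk : 3 ≤ kk) :
    ∃ u v z : MvPowerSeries (Fin 2) k,
      u ^ 2 - z * v ^ 2 ∈
          (IsLocalRing.maximalIdeal (MvPowerSeries (Fin 2) k)) ^ (kk ^ 2 - 4) ∧
      ∀ x y w : MvPowerSeries (Fin 2) k, x ^ 2 - w * y ^ 2 = 0 →
        ¬ (u - x ∈ (IsLocalRing.maximalIdeal (MvPowerSeries (Fin 2) k)) ^ (2 * kk - 2 + 1) ∧
           v - y ∈ (IsLocalRing.maximalIdeal (MvPowerSeries (Fin 2) k)) ^ (2 * kk - 2 + 1) ∧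
           z - w ∈ (IsLocalRing.maximalIdeal (MvPowerSeries (Fin 2) k)) ^ (2 * kk - 2 + 1)) := by
  open MvPowerSeries in
  have h2 : (2 : k) ≠ 0 := Ring.two_ne_zero hk
  obtain ⟨u, hu⟩ := exists_sq_sub_mul_sq_mem h2 hkk
  refine ⟨u, X 0 ^ (2 * kk - 3), X 0 ^ 2 + X 1 ^ (kk - 2), hu, ?_⟩
  rintro x y w hxyw ⟨-, hvy, hzw⟩
  have hy : y ≠ 0 := by
    rintro rfl
    exact X_pow_notMem_maximalIdeal_pow (show 2 * kk - 3 < 2 * kk - 2 + 1 by omega) (0 : Fin 2)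
      (by simpa using hvy)
  exact sq_ne_mul_sq_of_sub_mem h2 hkk hy hzw (sub_eq_zero.1 hxyw)
end

section
/- Let O = k[[T₁,...,T_N]] and x ∈ V̂ (the completion of the valuation ring V dominating O) be algebraic over the fraction field K of O with x ∉ K. Then there exists a function γ : ℕ → ℕ such that ord(u/v − x) ≤ γ(ord(v)) for all u, v ∈ O with v ≠ 0 and u/v ≠ x. (Existence of a diophantine-approximation bound, not necessarily affine.) -/
/-!
Fix `n` and put `r = n + 1`. The pairs `(u, v)` with `ord (ι u - x ι v) ≥ c` form a decreasing
chain of `k`-subspaces `L c` of `O × O`, and `L c` contains `W c`, the pairs of series of order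
`≥ c` (on `O` these are the ideals `m^c`). As `(O × O) ⧸ W r` is finite-dimensional, the subspaces
`L c + W r` stabilise, and a Mittag-Leffler argument using the completeness of `O` shows that every
pair in `L s`, for `s` large, is congruent modulo `W r` to an exact solution `ι u = x ι v`. Since
`x ∉ K`, exact solutions have `v = 0`; hence `ord v ≥ r`, and `γ n := s` works.
-/

namespace Submodule

variable {k V : Type*} [Ring k] [AddCommGroup V] [Module k V] {W L : ℕ → Submodule k V}

theorem exists_le_sup_of_antitone (hL : Antitone L) (r : ℕ) [IsArtinian k (V ⧸ W r)] :
    ∃ s, ∀ c, L s ≤ L c ⊔ W r := by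
  obtain ⟨s, hs⟩ := IsArtinian.monotone_stabilizes
    ⟨fun c => OrderDual.toDual ((L c).map (W r).mkQ), fun _ _ h => map_mono (hL h)⟩
  refine ⟨s, fun c => ?_⟩
  have hmap : (L s).map (W r).mkQ ≤ (L c).map (W r).mkQ := by
    rcases le_total c s with h | h
    · exact map_mono (hL h)
    · exact (congrArg OrderDual.ofDual (hs c h)).le
  simpa only [comap_map_mkQ, sup_comm] using (map_le_iff_le_comap.mp hmap)

theorem sub_initial_mem_of_succ_sub_mem (hW : Antitone W) {a : ℕ → V}
    (ha : ∀ j, a (j + 1) - a j ∈ W j) (j : ℕ) : a j - a 0 ∈ W 0 := by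
  induction j with
  | zero => simp
  | succ j ih => simpa using add_mem (hW (Nat.zero_le j) (ha j)) ih

theorem exists_mem_iInf_sub_mem (hW : Antitone W) [∀ r, IsArtinian k (V ⧸ W r)]
    (hcomplete : ∀ a : ℕ → V, (∀ j, a (j + 1) - a j ∈ W j) → ∃ b, ∀ j, b - a j ∈ W j)
    (hL : Antitone L) (hWL : ∀ c, W c ≤ L c) (r : ℕ) :
    ∃ s, ∀ p ∈ L s, ∃ z ∈ ⨅ c, L c, z - p ∈ W r := by
  choose s hs using fun m => exists_le_sup_of_antitone (W := W) hL m
  refine ⟨s r, fun p hp => ?_⟩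
  -- correct `p` successively modulo `W r`, `W (r + 1)`, ... into `L (s r)`, `L (s (r + 1))`, ...;
  -- the limit of these corrections lies in every `L c`
  have step : ∀ j y, ∃ y', y ∈ L (s (r + j)) →
      y' ∈ L (s (r + (j + 1))) ∧ y' - y ∈ W (r + j) := by
    intro j y
    by_cases hy : y ∈ L (s (r + j))
    · obtain ⟨y', hy', w, hw, rfl⟩ := mem_sup.mp (hs (r + j) _ hy)
      exact ⟨y', fun _ => ⟨hy', by simpa using neg_mem hw⟩⟩
    · exact ⟨0, fun h => absurd h hy⟩
  choose next hnext using step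
  let a : ℕ → V := fun j => Nat.rec p next j
  have ha_mem : ∀ j, a j ∈ L (s (r + j)) := by
    intro j
    induction j with
    | zero => exact hp
    | succ j ih => exact (hnext j (a j) ih).1
  have ha_succ : ∀ j, a (j + 1) - a j ∈ W (r + j) := fun j => (hnext j (a j) (ha_mem j)).2
  obtain ⟨b, hb⟩ := hcomplete a fun j => hW (Nat.le_add_left j r) (ha_succ j)
  refine ⟨b, mem_iInf _ |>.mpr fun c => ?_, ?_⟩
  · have hac : a c ∈ L c := by
      have := hs (r + c) c (ha_mem c)
      rwa [sup_eq_left.mpr ((hW (Nat.le_add_left c r)).trans (hWL c))] at this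
    simpa using add_mem (hWL c (hb c)) hac
  · change b - a 0 ∈ W r
    simpa using add_mem (hb r)
      (sub_initial_mem_of_succ_sub_mem (W := fun j => W (r + j))
        (fun _ _ h => hW (by omega)) ha_succ r)

end Submodule

theorem PowerSeries.X_pow_dvd_iff_le_order {R : Type*} [Semiring R] {φ : PowerSeries R}
    {n : ℕ} : X ^ n ∣ φ ↔ (n : ℕ∞) ≤ φ.order := by
  rw [order_eq_emultiplicity_X, pow_dvd_iff_le_emultiplicity]

namespace MvPowerSeries

variable {σ R : Type*}

theorem exists_eq_sum_X_mul_of_le_order [Fintype σ] [CommSemiring R] {f : MvPowerSeries σ R}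
    {r : ℕ} (hf : ((r + 1 : ℕ) : ℕ∞) ≤ f.order) :
    ∃ g : σ → MvPowerSeries σ R, (∀ i, (r : ℕ∞) ≤ (g i).order) ∧ f = ∑ i, X i * g i := by
  classical
  let _ : LinearOrder σ := LinearOrder.lift' _ (Fintype.equivFin σ).injective
  -- each monomial `d ≠ 0` of `f` is assigned to the smallest variable occurring in it
  let g : σ → MvPowerSeries σ R := fun i e =>
    if (e + Finsupp.single i 1).support.min = (i : WithTop σ) then
      coeff (e + Finsupp.single i 1) f else 0
  have hg : ∀ i e, coeff e (g i) =
      if (e + Finsupp.single i 1).support.min = (i : WithTop σ) then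
        coeff (e + Finsupp.single i 1) f else 0 := fun _ _ => rfl
  have hcoeff : ∀ i d, coeff d (X i * g i) =
      if Finsupp.single i 1 ≤ d ∧ d.support.min = (i : WithTop σ) then coeff d f else 0 := by
    intro i d
    rw [X_def, coeff_monomial_mul]
    by_cases hle : Finsupp.single i 1 ≤ d
    · rw [if_pos hle, one_mul, hg, tsub_add_cancel_of_le hle]
      simp [hle]
    · simp [hle]
  refine ⟨g, fun i => le_order fun e he => ?_, ext fun d => ?_⟩
  · have : ((e + Finsupp.single i 1).degree : ℕ∞) < f.order := by
      refine lt_of_lt_of_le ?_ hf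
      rw [map_add, Finsupp.degree_single]
      exact_mod_cast Nat.succ_lt_succ (by exact_mod_cast he : e.degree < r)
    rw [hg, coeff_of_lt_order this, ite_self]
  · rw [map_sum, Finset.sum_congr rfl fun i _ => hcoeff i d]
    by_cases hd : d = 0
    · subst hd
      have : ((0 : σ →₀ ℕ).degree : ℕ∞) < f.order := lt_of_lt_of_le (by simp) hf
      simp [coeff_of_lt_order this]
    · obtain ⟨i₀, hi₀⟩ := Finset.min_of_nonempty (Finsupp.support_nonempty_iff.mpr hd)
      have hiff : ∀ i,
          (Finsupp.single i 1 ≤ d ∧ d.support.min = (i : WithTop σ)) ↔ i = i₀ := by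
        refine fun i => ⟨fun h => WithTop.coe_injective (h.2.symm.trans hi₀), ?_⟩
        rintro rfl
        have := Finsupp.mem_support_iff.mp (Finset.mem_of_min hi₀)
        exact ⟨Finsupp.single_le_iff.mpr (Nat.one_le_iff_ne_zero.mpr this), hi₀⟩
      simp_rw [hiff]
      simp

theorem mem_span_range_X_pow_of_le_order [Finite σ] [CommSemiring R] {f : MvPowerSeries σ R}
    {r : ℕ} (hf : (r : ℕ∞) ≤ f.order) : f ∈ Ideal.span (Set.range X) ^ r := by
  have := Fintype.ofFinite σ
  induction r generalizing f with
  | zero => simp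
  | succ r ih =>
    obtain ⟨g, hg, rfl⟩ := exists_eq_sum_X_mul_of_le_order hf
    refine Ideal.sum_mem _ fun i _ => ?_
    rw [pow_succ']
    exact Ideal.mul_mem_mul (Ideal.subset_span ⟨i, rfl⟩) (ih (hg i))

theorem exists_forall_le_order_sub [CommRing R] {a : ℕ → MvPowerSeries σ R}
    (ha : ∀ j : ℕ, (j : ℕ∞) ≤ (a (j + 1) - a j).order) :
    ∃ b, ∀ j : ℕ, (j : ℕ∞) ≤ (b - a j).order := by
  have hstable : ∀ d i j, d.degree < i → i ≤ j → coeff d (a j) = coeff d (a i) := by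
    intro d i j hd hij
    induction j, hij using Nat.le_induction with
    | base => rfl
    | succ j hij ih =>
      have : (d.degree : ℕ∞) < (a (j + 1) - a j).order :=
        lt_of_lt_of_le (by exact_mod_cast hd.trans_le hij) (ha j)
      rw [← ih, ← sub_eq_zero, ← map_sub, coeff_of_lt_order this]
  let b : MvPowerSeries σ R := fun d => coeff d (a (d.degree + 1))
  have hb : ∀ d, coeff d b = coeff d (a (d.degree + 1)) := fun _ => rfl
  refine ⟨b, fun j => le_order fun d hd => ?_⟩
  have hd : d.degree < j := by exact_mod_cast hd
  rw [map_sub, sub_eq_zero, hb]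
  exact (hstable d _ j (Nat.lt_succ_self _) hd).symm

def coeffsBelow [CommSemiring R] (r : ℕ) :
    MvPowerSeries σ R →ₗ[R] ({d : σ →₀ ℕ // d.degree < r} → R) :=
  LinearMap.pi fun d => coeff d.1

theorem coeffsBelow_eq_zero_iff [CommSemiring R] {r : ℕ} {f : MvPowerSeries σ R} :
    coeffsBelow r f = 0 ↔ (r : ℕ∞) ≤ f.order :=
  ⟨fun h => le_order fun d hd => congrFun h ⟨d, by exact_mod_cast hd⟩,
    fun h => funext fun d => coeff_of_lt_order (lt_of_lt_of_le (by exact_mod_cast d.2) h)⟩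

variable (σ R) in
def orderFiltrationProd [CommSemiring R] (r : ℕ) :
    Submodule R (MvPowerSeries σ R × MvPowerSeries σ R) :=
  LinearMap.ker ((coeffsBelow r).prodMap (coeffsBelow r))

theorem mem_orderFiltrationProd [CommSemiring R] {r : ℕ}
    {p : MvPowerSeries σ R × MvPowerSeries σ R} :
    p ∈ orderFiltrationProd σ R r ↔ (r : ℕ∞) ≤ p.1.order ∧ (r : ℕ∞) ≤ p.2.order := by
  simp [orderFiltrationProd, coeffsBelow_eq_zero_iff]

theorem antitone_orderFiltrationProd [CommSemiring R] : Antitone (orderFiltrationProd σ R) :=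
  fun _ _ h _ hp => mem_orderFiltrationProd.mpr
    ⟨le_trans (by exact_mod_cast h) (mem_orderFiltrationProd.mp hp).1,
      le_trans (by exact_mod_cast h) (mem_orderFiltrationProd.mp hp).2⟩

instance [Finite σ] [CommRing R] [IsArtinianRing R] (r : ℕ) :
    IsArtinian R ((MvPowerSeries σ R × MvPowerSeries σ R) ⧸ orderFiltrationProd σ R r) :=
  have : Finite {d : σ →₀ ℕ // d.degree < r} := (Finsupp.finite_of_degree_lt r).to_subtype
  isArtinian_of_linearEquiv (LinearMap.quotKerEquivRange _).symm

theorem exists_forall_sub_mem_orderFiltrationProd [CommRing R]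
    {a : ℕ → MvPowerSeries σ R × MvPowerSeries σ R}
    (ha : ∀ j, a (j + 1) - a j ∈ orderFiltrationProd σ R j) :
    ∃ b, ∀ j, b - a j ∈ orderFiltrationProd σ R j := by
  simp only [mem_orderFiltrationProd, Prod.fst_sub, Prod.snd_sub] at ha ⊢
  obtain ⟨b₁, hb₁⟩ := exists_forall_le_order_sub (a := fun j => (a j).1) fun j => (ha j).1
  obtain ⟨b₂, hb₂⟩ := exists_forall_le_order_sub (a := fun j => (a j).2) fun j => (ha j).2
  exact ⟨(b₁, b₂), fun j => ⟨hb₁ j, hb₂ j⟩⟩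

end MvPowerSeries

namespace PowerSeries

variable {A F : Type*} [CommRing A] [CommRing F]

theorem le_order_sub_mul {φ ψ χ : PowerSeries F} {n : ℕ∞} (hφ : n ≤ φ.order)
    (hψ : n ≤ ψ.order) : n ≤ (φ - χ * ψ).order := by
  refine le_trans (le_min hφ ?_) (sub_eq_add_neg φ _ ▸ min_order_le_order_add _ _)
  rw [order_neg]
  exact hψ.trans (le_add_self.trans (le_order_mul _ _))

def approxSubmodule (ι : A →+* PowerSeries F) (x : PowerSeries F) (c : ℕ) :
    Submodule A (A × A) where
  carrier := {p | (c : ℕ∞) ≤ (ι p.1 - x * ι p.2).order}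
  add_mem' {p q} hp hq := by
    have : ι (p + q).1 - x * ι (p + q).2 = (ι p.1 - x * ι p.2) + (ι q.1 - x * ι q.2) := by
      simp only [Prod.fst_add, Prod.snd_add, map_add]
      ring
    simpa only [Set.mem_ofPred_eq, this] using
      (le_min hp hq).trans (min_order_le_order_add _ _)
  zero_mem' := by simp
  smul_mem' a p hp := by
    have : ι (a • p).1 - x * ι (a • p).2 = ι a * (ι p.1 - x * ι p.2) := by
      simp only [Prod.smul_fst, Prod.smul_snd, smul_eq_mul, map_mul]
      ring
    simpa only [Set.mem_ofPred_eq, this] using hp.trans (le_add_self.trans (le_order_mul _ _))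

theorem mem_approxSubmodule {ι : A →+* PowerSeries F} {x : PowerSeries F} {c : ℕ}
    {p : A × A} : p ∈ approxSubmodule ι x c ↔ (c : ℕ∞) ≤ (ι p.1 - x * ι p.2).order :=
  Iff.rfl

theorem antitone_approxSubmodule (ι : A →+* PowerSeries F) (x : PowerSeries F) :
    Antitone (approxSubmodule ι x) :=
  fun _ _ h _ hp => mem_approxSubmodule.mpr (le_trans (by exact_mod_cast h) hp)

end PowerSeries

open MvPowerSeries PowerSeries in
theorem exists_le_order_of_le_order_sub_mul {σ k F : Type*} [Finite σ] [CommRing k]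
    [IsArtinianRing k] [CommRing F]
    {ι : MvPowerSeries σ k →+* PowerSeries F} (hι : ∀ f, f.order ≤ (ι f).order)
    {x : PowerSeries F} (hx : ∀ a b, ι a = x * ι b → b = 0) (r : ℕ) :
    ∃ s : ℕ, ∀ u v, (s : ℕ∞) ≤ (ι u - x * ι v).order → (r : ℕ∞) ≤ (ι v).order := by
  have hWL : ∀ c, orderFiltrationProd σ k c ≤ (approxSubmodule ι x c).restrictScalars k :=
    fun c p hp => le_order_sub_mul ((mem_orderFiltrationProd.mp hp).1.trans (hι _))
      ((mem_orderFiltrationProd.mp hp).2.trans (hι _))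
  obtain ⟨s, hs⟩ := Submodule.exists_mem_iInf_sub_mem
    (L := fun c => (approxSubmodule ι x c).restrictScalars k) antitone_orderFiltrationProd
    (fun _ => exists_forall_sub_mem_orderFiltrationProd)
    (fun _ _ h _ hp => antitone_approxSubmodule ι x h hp) hWL r
  refine ⟨s, fun u v huv => ?_⟩
  obtain ⟨z, hz, hzuv⟩ := hs (u, v) huv
  have hz_exact : ι z.1 = x * ι z.2 := by
    refine sub_eq_zero.mp (order_eq_top.mp (ENat.eq_top_iff_forall_ge.mpr fun c => ?_))
    exact Submodule.mem_iInf _ |>.mp hz c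
  have hv := (mem_orderFiltrationProd.mp hzuv).2
  rw [Prod.snd_sub, hx _ _ hz_exact, zero_sub, MvPowerSeries.order_neg] at hv
  exact hv.trans (hι v)

theorem diophantine_approximation_exists_general
    {k F : Type*} [Field k] [Field F] {N : ℕ}
    (ι : MvPowerSeries (Fin N) k →+* PowerSeries F)
    (hι : ∀ (f : MvPowerSeries (Fin N) k) (n : ℕ),
      f ∈ (IsLocalRing.maximalIdeal (MvPowerSeries (Fin N) k)) ^ n ↔
        (PowerSeries.X : PowerSeries F) ^ n ∣ ι f)
    (x : PowerSeries F)
    (hirr : ¬ ∃ a b : MvPowerSeries (Fin N) k, b ≠ 0 ∧ ι a = x * ι b) :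
    ∃ γ : ℕ → ℕ, ∀ (u v : MvPowerSeries (Fin N) k) (nv : ℕ), v ≠ 0 →
      PowerSeries.order (ι v) = (nv : ℕ∞) → ι u ≠ x * ι v →
      PowerSeries.order (ι u - x * ι v) ≤ ((γ nv + nv : ℕ) : ℕ∞) := by
  have hX : Ideal.span (Set.range MvPowerSeries.X) ≤
      IsLocalRing.maximalIdeal (MvPowerSeries (Fin N) k) :=
    Ideal.span_le.mpr <| Set.range_subset_iff.mpr fun i => by
      simp [IsLocalRing.mem_maximalIdeal, MvPowerSeries.isUnit_iff_constantCoeff]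
  have hord : ∀ f, f.order ≤ (ι f).order := fun f => ENat.forall_natCast_le_iff_le.mp
    fun n hn => PowerSeries.X_pow_dvd_iff_le_order.mp <| (hι f n).mp <|
      Ideal.pow_right_mono hX n (MvPowerSeries.mem_span_range_X_pow_of_le_order hn)
  choose s hs using exists_le_order_of_le_order_sub_mul hord
    (fun a b h => not_not.mp fun hb => hirr ⟨a, b, hb, h⟩)
  refine ⟨fun n => s (n + 1), fun u v nv _ hv _ => le_of_not_gt fun hlt => ?_⟩
  have := hs (nv + 1) u v (le_trans (by exact_mod_cast Nat.le_add_right _ _) hlt.le)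
  rw [hv] at this
  exact absurd this (by exact_mod_cast Nat.not_succ_le_self nv)

/-- Diophantine approximation bound: if `x ∈ V̂` (the completion `F[[T]]` of the valuation
ring dominating `O = k[[T₁,…,T_N]]`, embedded via the order-preserving ring map `ι`) is
algebraic over `K = Frac O` but `x ∉ K`, then there is a function `γ : ℕ → ℕ` with
`ord(u/v − x) ≤ γ(ord v)` for all `u, v ∈ O`, `v ≠ 0`, `u/v ≠ x`;
i.e. `ord(ι u − x·ι v) ≤ γ(ord v) + ord v`. -/
theorem diophantine_approximation_exists
    {k F : Type*} [Field k] [Field F] {N : ℕ}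
    (ι : MvPowerSeries (Fin N) k →+* PowerSeries F)
    (hι : ∀ (f : MvPowerSeries (Fin N) k) (n : ℕ),
      f ∈ (IsLocalRing.maximalIdeal (MvPowerSeries (Fin N) k)) ^ n ↔
        (PowerSeries.X : PowerSeries F) ^ n ∣ ι f)
    (x : PowerSeries F)
    (halg : ∃ Q : Polynomial (MvPowerSeries (Fin N) k), Q ≠ 0 ∧ Polynomial.eval₂ ι x Q = 0)
    (hirr : ¬ ∃ a b : MvPowerSeries (Fin N) k, b ≠ 0 ∧ ι a = x * ι b) :
    ∃ γ : ℕ → ℕ, ∀ (u v : MvPowerSeries (Fin N) k) (nv : ℕ), v ≠ 0 →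
      PowerSeries.order (ι v) = (nv : ℕ∞) → ι u ≠ x * ι v →
      PowerSeries.order (ι u - x * ι v) ≤ ((γ nv + nv : ℕ) : ℕ∞) :=
  diophantine_approximation_exists_general ι hι x hirr
end
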